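/- arXiv:1612.06628 — 7 statements merged into one kernel-verified Lean document; each statement's English description precedes it below -/
import Mathlib

section
/- A reduced commutative ring is Armendariz: if f(x) = a_0 + a_1 x + ... + a_n x^n and g(x) = b_0 + b_1 x + ... + b_m x^m are polynomials over a reduced commutative ring B with f(x)g(x) = 0, then a_i b_j = 0 for all i and j. -/
open Polynomial

/-!
For every prime `P` of `B`, the extended ideal `P[X]` is prime and contains `f * g = 0`, so all
coefficients of `f` or all coefficients of `g` lie in `P`. Hence `a_i * b_j` lies in every prime,
so it is nilpotent, and therefore zero in a reduced ring.
-/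

namespace Polynomial

variable {R : Type*} [CommRing R]

theorem coeff_mul_coeff_mem_of_mul_eq_zero {f g : R[X]} (h : f * g = 0) (P : Ideal R)
    [P.IsPrime] (i j : ℕ) : f.coeff i * g.coeff j ∈ P := by
  have hfg : f * g ∈ P.map (C : R →+* R[X]) := h ▸ zero_mem _
  rcases Ideal.IsPrime.mem_or_mem inferInstance hfg with hf | hg
  · exact P.mul_mem_right _ (Ideal.mem_map_C_iff.mp hf i)
  · exact P.mul_mem_left _ (Ideal.mem_map_C_iff.mp hg j)

theorem isNilpotent_coeff_mul_coeff_of_mul_eq_zero {f g : R[X]} (h : f * g = 0) (i j : ℕ) :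
    IsNilpotent (f.coeff i * g.coeff j) :=
  nilpotent_iff_mem_prime.mpr fun P _ => coeff_mul_coeff_mem_of_mul_eq_zero h P i j

end Polynomial

theorem isReduced_of_mul_self_eq_zero {R : Type*} [MonoidWithZero R]
    (hred : ∀ b : R, b * b = 0 → b = 0) : IsReduced R :=
  (isReduced_iff_pow_one_lt 2 one_lt_two).mpr fun b hb => hred b (by rwa [← sq])

/-- A reduced commutative ring is Armendariz: if `f * g = 0` in `B[x]`, then all products
of coefficients `a_i * b_j` vanish. -/
theorem stmt5 {B : Type*} [CommRing B] (hred : ∀ b : B, b * b = 0 → b = 0)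
    (f g : Polynomial B) (h : f * g = 0) (i j : ℕ) :
    f.coeff i * g.coeff j = 0 := by
  have := isReduced_of_mul_self_eq_zero hred
  exact (isNilpotent_coeff_mul_coeff_of_mul_eq_zero h i j).eq_zero
end

section
/- Every reduced ring is quasi-Armendariz: if B is a reduced ring and f(x), g(x) in B[x] satisfy f(x) B[x] g(x) = 0, then a_i B b_j = 0 for all coefficients a_i of f and b_j of g. -/
/-!
A reduced ring is reversible (`a * b = 0` gives `(b * a) ^ 2 = b * (a * b) * a = 0`), hence
`a * b = 0` implies `a * r * b = 0` for every `r`. Applying this to `f * C r * g = 0` reduces the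
theorem to Armendariz's property `f * g = 0 → aᵢ * bⱼ = 0`. That is proved by induction on
`(i + j, j)` in lexicographic order: multiplying the `(i + j)`-th coefficient of `f * g` on the
right by `bⱼ`, every term other than `aᵢ * bⱼ * bⱼ` vanishes by the induction hypothesis, and
`aᵢ * bⱼ * bⱼ = 0` forces `aᵢ * bⱼ = 0`.
-/

open Polynomial Finset.HasAntidiagonal

namespace IsReduced

variable {R : Type*} [MonoidWithZero R] [IsReduced R] {a b : R}

theorem eq_zero_of_mul_self_eq_zero (h : a * a = 0) : a = 0 :=
  eq_zero_of_pow_eq_zero (n := 2) (by rwa [sq])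

theorem mul_eq_zero_symm (h : a * b = 0) : b * a = 0 :=
  eq_zero_of_mul_self_eq_zero <| by rw [mul_assoc, ← mul_assoc a, h, zero_mul, mul_zero]

theorem mul_mul_eq_zero_of_mul_eq_zero (h : a * b = 0) (r : R) : a * r * b = 0 :=
  mul_eq_zero_symm <| by rw [← mul_assoc, mul_eq_zero_symm h, zero_mul]

theorem mul_eq_zero_of_mul_mul_self_eq_zero (h : a * b * b = 0) : a * b = 0 :=
  eq_zero_of_mul_self_eq_zero <| by rw [mul_assoc a b, mul_eq_zero_symm h, mul_zero]

end IsReduced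

theorem Polynomial.coeff_mul_coeff_eq_zero_of_mul_eq_zero {R : Type*} [Semiring R] [IsReduced R]
    {f g : R[X]} (h : f * g = 0) (i j : ℕ) : f.coeff i * g.coeff j = 0 := by
  induction hn : i + j using Nat.strong_induction_on generalizing i j with
  | _ n ihn =>
  induction j using Nat.strong_induction_on generalizing i with
  | _ j ihj =>
  apply IsReduced.mul_eq_zero_of_mul_mul_self_eq_zero
  have hsum : ∑ p ∈ antidiagonal n, f.coeff p.1 * g.coeff p.2 * g.coeff j = 0 := by
    rw [← Finset.sum_mul, ← coeff_mul, h, coeff_zero, zero_mul]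
  rwa [Finset.sum_eq_single_of_mem (i, j) (mem_antidiagonal.2 hn)] at hsum
  rintro ⟨k, l⟩ hkl hne
  simp only [mem_antidiagonal] at hkl
  rcases lt_trichotomy l j with hlt | rfl | hgt
  · rw [ihj l hlt k (by omega), zero_mul]
  · obtain rfl : k = i := by omega
    exact absurd rfl hne
  · exact IsReduced.mul_mul_eq_zero_of_mul_eq_zero (ihn (k + j) (by omega) k j rfl) _

/-- Every reduced ring is quasi-Armendariz: if `f(x) B[x] g(x) = 0`, then `a_i B b_j = 0`
for all coefficients `a_i` of `f` and `b_j` of `g`. -/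
theorem stmt6 {B : Type*} [Ring B] (hred : ∀ b : B, b * b = 0 → b = 0)
    (f g : Polynomial B) (h : ∀ p : Polynomial B, f * p * g = 0) (i j : ℕ) (r : B) :
    f.coeff i * r * g.coeff j = 0 := by
  have : IsReduced B :=
    (isReduced_iff_pow_one_lt 2 one_lt_two).2 fun x hx => hred x (by rwa [sq] at hx)
  simpa only [coeff_mul_C] using coeff_mul_coeff_eq_zero_of_mul_eq_zero (h (C r)) i j
end

section
/- Let B be a ring and M a right B-module. If M is a reduced B-module, then the polynomial module M[x] is a reduced B[x]-module. Conversely, if M[x] is a reduced B[x]-module, then M is a reduced B-module. -/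
open Polynomial MulOpposite

/-- The polynomial module `M[x]` over `Bᵐᵒᵖ[X]`, for a right `B`-module `M`
(encoded as a left `Bᵐᵒᵖ`-module). -/
noncomputable def polyModAux (B : Type*) [Ring B] (M : Type*) [AddCommGroup M]
    [Module Bᵐᵒᵖ M] : Module (Polynomial Bᵐᵒᵖ) (ℕ →₀ M) :=
  Module.compHom _
    (Polynomial.eval₂RingHom' (Module.toAddMonoidEnd Bᵐᵒᵖ (ℕ →₀ M))
      (Finsupp.mapDomain.addMonoidHom Nat.succ : AddMonoid.End (ℕ →₀ M))
      (fun a => AddMonoidHom.ext fun p => (Finsupp.mapDomain_smul a p).symm))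

/-- `M[x]` as a right `B[x]`-module, i.e. a left module over `(B[x])ᵐᵒᵖ`. -/
noncomputable def polyModOp (B : Type*) [Ring B] (M : Type*) [AddCommGroup M]
    [Module Bᵐᵒᵖ M] : Module (Polynomial B)ᵐᵒᵖ (ℕ →₀ M) :=
  letI := polyModAux B M
  Module.compHom _ (Polynomial.opRingEquiv B).toRingHom

/-- The right action `m(x) · f(x)` of `B[x]` on the polynomial module `M[x]`. -/
noncomputable def rsmul (B : Type*) [Ring B] (M : Type*) [AddCommGroup M]
    [Module Bᵐᵒᵖ M] (p : ℕ →₀ M) (f : Polynomial B) : ℕ →₀ M := by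
  letI := polyModOp B M
  exact op f • p

/-- A right `S`-module `N` is reduced if `na = 0` implies `nS ∩ Na = 0`. -/
def RModReduced (S : Type*) [Ring S] (N : Type*) [AddCommGroup N] [Module Sᵐᵒᵖ N] : Prop :=
  ∀ (n : N) (a : S), op a • n = 0 →
    ∀ x : N, (∃ b : S, x = op b • n) → (∃ n' : N, x = op a • n') → x = 0

/-!
Reducedness of `M` amounts to semicommutativity (`m a = 0 → m b a = 0`) together with rigidity
(`m a a = 0 → m a = 0`). If `M` is reduced and `m(x) f(x) = 0`, these two properties give
`mᵢ fⱼ = 0` for all `i, j` by induction on `i + j` (an Armendariz property), and coefficientwise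
this makes `M[x]` semicommutative and rigid, hence reduced. Conversely `M` embeds in `M[x]` as
the constants, compatibly with `B → B[x]`.
-/

open Finset

namespace RModReduced

variable {S : Type*} [Ring S] {N : Type*} [AddCommGroup N] [Module Sᵐᵒᵖ N]

theorem smul_smul_eq_zero (h : RModReduced S N) {n : N} {a : S} (ha : op a • n = 0) (b : S) :
    op a • op b • n = 0 :=
  h n a ha _ ⟨b * a, by rw [op_mul, mul_smul]⟩ ⟨op b • n, rfl⟩

theorem smul_eq_zero_of_smul_smul_self (h : RModReduced S N) {n : N} {a : S}
    (ha : op a • op a • n = 0) : op a • n = 0 :=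
  h (op a • n) a ha _ ⟨1, by rw [op_one, one_smul]⟩ ⟨n, rfl⟩

theorem of_smul_smul (semicomm : ∀ (n : N) (a b : S), op a • n = 0 → op a • op b • n = 0)
    (rigid : ∀ (n : N) (a : S), op a • op a • n = 0 → op a • n = 0) : RModReduced S N := by
  rintro n a ha _ ⟨b, rfl⟩ ⟨n', hn'⟩
  have hbn := semicomm n a b ha
  rw [hn'] at hbn ⊢
  exact rigid n' a hbn

/-- Induct on `i + j`, then on `j`: in `aⱼ (m a)_{i+j} = ∑ m_{i'} a_{j'} aⱼ` every term other
than `mᵢ aⱼ aⱼ` vanishes, by the inner hypothesis when `j' < j` and by semicommutativity from the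
outer one when `j' > j`; rigidity then gives `mᵢ aⱼ = 0`. -/
theorem smul_eq_zero_of_smul_sum_antidiagonal (h : RModReduced S N) (m : ℕ → N) (a : ℕ → S)
    (H : ∀ k t, op (a t) • ∑ ij ∈ antidiagonal k, op (a ij.2) • m ij.1 = 0) (i j : ℕ) :
    op (a j) • m i = 0 := by
  induction hk : i + j using Nat.strong_induction_on generalizing i j with
  | _ k ihk =>
  induction j using Nat.strong_induction_on generalizing i with
  | _ j ihj =>
  have hsum := H k j
  rw [smul_sum, sum_eq_single_of_mem (i, j) (by simp [hk])] at hsum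
  · exact h.smul_eq_zero_of_smul_smul_self hsum
  rintro ⟨i', j'⟩ hij hne
  rw [HasAntidiagonal.mem_antidiagonal] at hij
  rcases lt_trichotomy j' j with hlt | rfl | hgt
  · rw [ihj j' hlt i' hij, smul_zero]
  · obtain rfl : i' = i := by omega
    exact absurd rfl hne
  · exact h.smul_smul_eq_zero (ihk (i' + j) (by omega) i' j rfl) _

end RModReduced

noncomputable def polyShift (M : Type*) [AddCommGroup M] : AddMonoid.End (ℕ →₀ M) :=
  Finsupp.mapDomain.addMonoidHom Nat.succ

theorem polyShift_pow_apply {M : Type*} [AddCommGroup M] (n : ℕ) (p : ℕ →₀ M) (k : ℕ) :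
    (polyShift M ^ n) p k = if n ≤ k then p (k - n) else 0 := by
  induction n generalizing k with
  | zero => rfl
  | succ n ih =>
    rw [pow_succ']
    change Finsupp.mapDomain Nat.succ ((polyShift M ^ n) p) k = _
    cases k with
    | zero => simp [Finsupp.mapDomain_of_notMem_range]
    | succ k => rw [Finsupp.mapDomain_apply Nat.succ_injective, ih]; simp

section Polynomial

variable {B : Type*} [Ring B] {M : Type*} [AddCommGroup M] [Module Bᵐᵒᵖ M]

theorem eval₂_polyShift_apply (q : Bᵐᵒᵖ[X]) (p : ℕ →₀ M) (k : ℕ) :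
    eval₂ (Module.toAddMonoidEnd Bᵐᵒᵖ (ℕ →₀ M)) (polyShift M) q p k =
      ∑ ij ∈ antidiagonal k, q.coeff ij.2 • p ij.1 := by
  induction q using Polynomial.induction_on' with
  | add q r hq hr =>
    simp only [eval₂_add, coeff_add, add_smul, sum_add_distrib, ← hq, ← hr]
    rfl
  | monomial n c =>
    rw [eval₂_monomial]
    change (c • (polyShift M ^ n) p) k = _
    rw [Finsupp.smul_apply, polyShift_pow_apply]
    simp only [coeff_monomial, ite_smul, zero_smul]
    split_ifs with hnk
    · rw [sum_eq_single_of_mem (k - n, n) (by simp [hnk])]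
      · simp
      · rintro ⟨i, j⟩ hij hne
        rw [HasAntidiagonal.mem_antidiagonal] at hij
        rw [if_neg (by rintro rfl; exact hne (by simp; omega))]
    · rw [smul_zero, eq_comm]
      refine sum_eq_zero fun ij hij => ?_
      rw [HasAntidiagonal.mem_antidiagonal] at hij
      rw [if_neg (by omega)]

attribute [local instance] polyModOp

theorem polyModOp_smul_eq_eval₂ (f : B[X]) (p : ℕ →₀ M) :
    op f • p = eval₂ (Module.toAddMonoidEnd Bᵐᵒᵖ (ℕ →₀ M)) (polyShift M) (opRingEquiv B (op f)) p :=
  rfl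

theorem polyModOp_smul_apply (f : B[X]) (p : ℕ →₀ M) (k : ℕ) :
    (op f • p) k = ∑ ij ∈ antidiagonal k, op (f.coeff ij.2) • p ij.1 := by
  simp only [polyModOp_smul_eq_eval₂, eval₂_polyShift_apply, coeff_opRingEquiv, unop_op]

theorem polyModOp_C_smul (c : B) (p : ℕ →₀ M) : op (C c) • p = op c • p := by
  rw [polyModOp_smul_eq_eval₂, opRingEquiv_op_C, eval₂_C]
  rfl

namespace RModReduced

theorem smul_coeff_eq_zero_of_smul_eq_zero (h : RModReduced B M) {m : ℕ →₀ M} {f : B[X]}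
    (hmf : op f • m = 0) (i j : ℕ) : op (f.coeff j) • m i = 0 :=
  h.smul_eq_zero_of_smul_sum_antidiagonal m f.coeff
    (fun k t => by rw [← polyModOp_smul_apply, hmf, Finsupp.zero_apply, smul_zero]) i j

theorem polynomial_smul_smul_eq_zero (h : RModReduced B M) {m : ℕ →₀ M} {f : B[X]}
    (hmf : op f • m = 0) (g : B[X]) : op f • op g • m = 0 := by
  ext k
  rw [polyModOp_smul_apply]
  refine sum_eq_zero fun ij _ => ?_
  rw [polyModOp_smul_apply, smul_sum]
  exact sum_eq_zero fun pq _ =>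
    h.smul_smul_eq_zero (h.smul_coeff_eq_zero_of_smul_eq_zero hmf pq.1 ij.2) _

theorem polynomial_smul_eq_zero_of_smul_smul_self (h : RModReduced B M) {m : ℕ →₀ M} {f : B[X]}
    (hff : op f • op f • m = 0) : op f • m = 0 := by
  have hcoeff := h.smul_coeff_eq_zero_of_smul_eq_zero hff
  have hm := h.smul_eq_zero_of_smul_sum_antidiagonal m f.coeff
    (fun k t => by rw [← polyModOp_smul_apply]; exact hcoeff k t)
  ext k
  rw [polyModOp_smul_apply]
  exact sum_eq_zero fun ij _ => hm ij.1 ij.2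

theorem polynomial (h : RModReduced B M) : RModReduced B[X] (ℕ →₀ M) :=
  of_smul_smul (fun _ _ g hmf => h.polynomial_smul_smul_eq_zero hmf g)
    (fun _ _ hff => h.polynomial_smul_eq_zero_of_smul_smul_self hff)

theorem of_polynomial (h : RModReduced B[X] (ℕ →₀ M)) : RModReduced B M := by
  have C_smul_single (c : B) (y : M) :
      op (C c) • Finsupp.single 0 y = Finsupp.single 0 (op c • y) := by
    rw [polyModOp_C_smul, Finsupp.smul_single]
  rintro m a hma _ ⟨b, rfl⟩ ⟨m', hm'⟩
  refine Finsupp.single_eq_zero.mp (h (Finsupp.single 0 m) (C a) ?_ _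
    ⟨C b, (C_smul_single b m).symm⟩ ⟨Finsupp.single 0 m', by rw [C_smul_single, hm']⟩)
  rw [C_smul_single, hma, Finsupp.single_zero]

end RModReduced

end Polynomial

/-- `M` is a reduced right `B`-module if and only if `M[x]` is a reduced right
`B[x]`-module. -/
theorem stmt7 (B : Type*) [Ring B] (M : Type*) [AddCommGroup M] [Module Bᵐᵒᵖ M] :
    letI := polyModOp B M
    (RModReduced B M ↔ RModReduced (Polynomial B) (ℕ →₀ M)) :=
  ⟨RModReduced.polynomial, RModReduced.of_polynomial⟩
end

section
/- Every Armendariz right B-module M with B embedded in M is abelian: for any m in M, r in B, and idempotent e in B, one has m*r*e = m*e*r. -/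
open Polynomial MulOpposite

/-- A right `B`-module `M` is Armendariz if `m(x) f(x) = 0` implies `m_i b_j = 0` for all
coefficients `m_i` of `m(x)` and `b_j` of `f(x)`. -/
def RArmendariz (B : Type*) [Ring B] (M : Type*) [AddCommGroup M] [Module Bᵐᵒᵖ M] : Prop :=
  ∀ (p : ℕ →₀ M) (f : Polynomial B), rsmul B M p f = 0 →
    ∀ i j : ℕ, op (f.coeff j) • p i = 0

open scoped RightActions

section

variable {B : Type*} [Ring B] {M : Type*} [AddCommGroup M] [Module Bᵐᵒᵖ M]

theorem rsmul_C_add_monomial_one (p : ℕ →₀ M) (a b : B) :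
    rsmul B M p (C a + monomial 1 b) = p <• a + p.mapDomain Nat.succ <• b := by
  change eval₂ (Module.toAddMonoidEnd Bᵐᵒᵖ (ℕ →₀ M))
    (Finsupp.mapDomain.addMonoidHom Nat.succ : AddMonoid.End (ℕ →₀ M))
    (opRingEquiv B (op (C a + monomial 1 b))) p = _
  rw [op_add, map_add, opRingEquiv_op_C, opRingEquiv_op_monomial]
  erw [eval₂_add, eval₂_C, eval₂_monomial, pow_one]
  rfl

/-- If `b ∈ eB(1 - e)`, then `m(x) = me + mbx` is annihilated by `f(x) = (1 - e) - bx`, and the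
Armendariz property applied to the coefficients `me` and `-b` gives `mb = meb = 0`. -/
theorem RArmendariz.smul_eq_zero_of_mem_corner (hArm : RArmendariz B M) (m : M) {e b : B}
    (he : IsIdempotentElem e) (heb : e * b = b) (hbe : b * e = 0) : m <• b = 0 := by
  have hb_one_sub : b * (1 - e) = b := by rw [mul_sub, mul_one, hbe, sub_zero]
  have hbb : b * b = 0 := by nth_rw 2 [← heb]; rw [← mul_assoc, hbe, zero_mul]
  have he_one_sub : e * (1 - e) = 0 := by rw [mul_sub, mul_one, he.eq, sub_self]
  set p : ℕ →₀ M := Finsupp.single 0 (m <• e) + Finsupp.single 1 (m <• b)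
  have hp : rsmul B M p (C (1 - e) + monomial 1 (-b)) = 0 := by
    simp only [p, rsmul_C_add_monomial_one, Finsupp.mapDomain_add, Finsupp.mapDomain_single,
      smul_add, Finsupp.smul_single, op_smul_op_smul, he_one_sub, hb_one_sub, heb,
      hbb, neg_zero, op_zero, zero_smul, Finsupp.single_zero, op_neg, neg_smul]
    abel
  have h := hArm p _ hp 0 1
  simpa [p, coeff_C, coeff_one, op_smul_op_smul, heb] using h

end

theorem stmt12_general {B : Type*} [Ring B] {M : Type*} [AddCommGroup M] [Module Bᵐᵒᵖ M]
    (hArm : RArmendariz B M) (m : M) (r e : B) (he : e * e = e) :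
    op e • (op r • m) = op r • (op e • m) := by
  have he' : IsIdempotentElem e := he
  have hleft : m <• (e * r) = m <• (e * r * e) := by
    have h := hArm.smul_eq_zero_of_mem_corner m he' (b := e * r * (1 - e))
      (by rw [← mul_assoc, ← mul_assoc, he])
      (by rw [mul_assoc, one_sub_mul, he, sub_self, mul_zero])
    rwa [show e * r * (1 - e) = e * r - e * r * e by noncomm_ring, op_sub, sub_smul,
      sub_eq_zero] at h
  have hright : m <• (r * e) = m <• (e * r * e) := by
    have h := hArm.smul_eq_zero_of_mem_corner m he'.one_sub (b := (1 - e) * r * e)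
      (by rw [← mul_assoc, ← mul_assoc, he'.one_sub.eq])
      (by rw [mul_assoc, mul_one_sub, he, sub_self, mul_zero])
    rwa [show (1 - e) * r * e = r * e - e * r * e by noncomm_ring, op_sub, sub_smul,
      sub_eq_zero] at h
  simp only [op_smul_op_smul, hleft, hright]

/-- Every Armendariz right `B`-module `M` with `B ⊆ M` is abelian: `mre = mer` for all
`m ∈ M`, `r ∈ B`, and idempotents `e` of `B`. -/
theorem stmt12 {B : Type*} [Ring B] {M : Type*} [AddCommGroup M] [Module Bᵐᵒᵖ M]
    (ι : B →ₗ[Bᵐᵒᵖ] M) (hι : Function.Injective ι)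
    (hArm : RArmendariz B M) (m : M) (r e : B) (he : e * e = e) :
    op e • (op r • m) = op r • (op e • m) :=
  stmt12_general hArm m r e he
end

section
/- Let M be a reduced right B-module. Then M is a p.p.-module if and only if M is a p.q.-Baer module. -/
open MulOpposite

/-- The annihilator in `S` of a subset `X` of a right `S`-module `N`:
`ann_S(X) = {r : S | Xr = 0}`. -/
def rAnn (S : Type*) [Ring S] {N : Type*} [AddCommGroup N] [Module Sᵐᵒᵖ N]
    (X : Set N) : Set S :=
  {r : S | ∀ x ∈ X, op r • x = 0}

/-- `C` is the right ideal `eS` generated by an idempotent `e` of `S`. -/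
def IsIdempotentGenerated (S : Type*) [Ring S] (C : Set S) : Prop :=
  ∃ e : S, e * e = e ∧ C = {x : S | ∃ b : S, x = e * b}

/-- A right `S`-module `N` is a p.p.-module if the annihilator of each element is
generated by an idempotent. -/
def IsPPMod (S : Type*) [Ring S] (N : Type*) [AddCommGroup N] [Module Sᵐᵒᵖ N] : Prop :=
  ∀ n : N, IsIdempotentGenerated S (rAnn S {n})

/-- A right `S`-module `N` is a p.q.-Baer module if the annihilator of each cyclic
submodule `nS` is generated by an idempotent. -/
def IsPQBaerMod (S : Type*) [Ring S] (N : Type*) [AddCommGroup N] [Module Sᵐᵒᵖ N] : Prop :=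
  ∀ n : N, IsIdempotentGenerated S (rAnn S {x : N | ∃ b : S, x = op b • n})

/- In a reduced module, `ma = 0` forces `(mb)a = 0` for every `b`: the element `m(ba)` lies both
in `mB` and in `Ma`. -/
lemma rAnn_singleton_subset_rAnn_cyclic_of_reduced {B : Type*} [Ring B] {M : Type*}
    [AddCommGroup M] [Module Bᵐᵒᵖ M] (hred : RModReduced B M) (m : M) :
    rAnn B ({m} : Set M) ⊆ rAnn B {x : M | ∃ b : B, x = op b • m} := by
  rintro a ha _ ⟨b, rfl⟩
  exact hred m a (ha m rfl) (op a • op b • m) ⟨b * a, by rw [op_mul, mul_smul]⟩ ⟨op b • m, rfl⟩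

lemma rAnn_cyclic_subset_rAnn_singleton {B : Type*} [Ring B] {M : Type*} [AddCommGroup M]
    [Module Bᵐᵒᵖ M] (m : M) :
    rAnn B {x : M | ∃ b : B, x = op b • m} ⊆ rAnn B ({m} : Set M) := by
  rintro a ha _ rfl
  exact ha _ ⟨1, by rw [op_one, one_smul]⟩

lemma rAnn_singleton_eq_rAnn_cyclic_of_reduced {B : Type*} [Ring B] {M : Type*}
    [AddCommGroup M] [Module Bᵐᵒᵖ M] (hred : RModReduced B M) (m : M) :
    rAnn B ({m} : Set M) = rAnn B {x : M | ∃ b : B, x = op b • m} :=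
  (rAnn_singleton_subset_rAnn_cyclic_of_reduced hred m).antisymm
    (rAnn_cyclic_subset_rAnn_singleton m)

/-- A reduced right `B`-module is a p.p.-module if and only if it is a p.q.-Baer module. -/
theorem stmt13 {B : Type*} [Ring B] {M : Type*} [AddCommGroup M] [Module Bᵐᵒᵖ M]
    (hred : RModReduced B M) : IsPPMod B M ↔ IsPQBaerMod B M :=
  forall_congr' fun m => by rw [rAnn_singleton_eq_rAnn_cyclic_of_reduced hred m]
end

section
/- Let B be a ring and M an Armendariz right B-module with B ⊆ M. Then M is a p.p.-module over B if and only if the polynomial module M[x] is a p.p.-module over B[x]. -/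
open Polynomial MulOpposite

/-!
If `ann(m) = eB` and `M` is Armendariz, then `e` is left semicentral: for `a = re - ere` the
polynomials `m + (ma)x` and `e - ax` multiply to zero, so `ma = 0`, i.e. `a ∈ eB ∩ (1 - e)B = 0`.
Left semicentral idempotents generate right ideals closed under finite intersections
(`eB ∩ fB = efB`). By the Armendariz property the annihilator of `p(x) ∈ M[x]` consists of the
polynomials all of whose coefficients lie in `⋂ᵢ ann(pᵢ) = ⋂ᵢ eᵢB = EB`, i.e. it is `E·B[x]`.
Conversely, if `ann(m) = E(x)B[x]` for the constant polynomial `m`, comparing constant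
coefficients gives `ann(m) = E(0)B`.
-/

/-- Birkenmeier's left semicentral idempotents, for which `eR` is a two-sided ideal; taking
`r = 1` shows that the condition forces `e * e = e`. -/
def IsLeftSemicentral {R : Type*} [Monoid R] (e : R) : Prop :=
  ∀ r, r * e = e * r * e

namespace IsLeftSemicentral

variable {R : Type*} [Monoid R] {e f : R}

theorem one : IsLeftSemicentral (1 : R) := fun r => by rw [one_mul, mul_one]

theorem isIdempotentElem (he : IsLeftSemicentral e) : IsIdempotentElem e := by
  simpa [IsIdempotentElem, eq_comm] using he 1

theorem mul (he : IsLeftSemicentral e) (hf : IsLeftSemicentral f) :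
    IsLeftSemicentral (e * f) := fun r => by
  have h : r * e * f = e * (r * e * f) := by
    conv_lhs => rw [he r]
    simp only [mul_assoc]
  rw [← mul_assoc, h, hf (r * e)]
  simp only [mul_assoc]

theorem mul_mul_eq_self_iff (he : IsLeftSemicentral e) (hf : IsLeftSemicentral f) (x : R) :
    e * f * x = x ↔ e * x = x ∧ f * x = x := by
  constructor
  · intro h
    refine ⟨by rw [← h, ← mul_assoc, ← mul_assoc, he.isIdempotentElem.eq], ?_⟩
    rw [← h, ← mul_assoc, ← mul_assoc, ← hf, h]
  · rintro ⟨hex, hfx⟩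
    rw [mul_assoc, hfx, hex]

end IsLeftSemicentral

theorem IsIdempotentElem.exists_eq_mul_iff {R : Type*} [Monoid R] {e : R} (he : IsIdempotentElem e)
    (x : R) : (∃ b, x = e * b) ↔ e * x = x :=
  ⟨fun ⟨b, hb⟩ => by rw [hb, ← mul_assoc, he.eq], fun h => ⟨x, h.symm⟩⟩

theorem exists_isLeftSemicentral_mul_eq_self_iff {R : Type*} [Monoid R] {ι : Type*} (s : Finset ι)
    (e : ι → R) (he : ∀ i, IsLeftSemicentral (e i)) :
    ∃ E : R, IsLeftSemicentral E ∧ ∀ x, E * x = x ↔ ∀ i ∈ s, e i * x = x := by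
  classical
  induction s using Finset.induction_on with
  | empty => exact ⟨1, .one, by simp⟩
  | insert a s _ ih =>
    obtain ⟨E, hE, hEx⟩ := ih
    refine ⟨E * e a, hE.mul (he a), fun x => ?_⟩
    rw [hE.mul_mul_eq_self_iff (he a), hEx, Finset.forall_mem_insert, and_comm]

theorem mem_rAnn_singleton {S : Type*} [Ring S] {N : Type*} [AddCommGroup N] [Module Sᵐᵒᵖ N]
    (r : S) (n : N) : r ∈ rAnn S {n} ↔ op r • n = 0 := by
  simp [rAnn]

theorem Finsupp.mapDomain_succ_iterate {M : Type*} [AddCommMonoid M] (j : ℕ) (p : ℕ →₀ M) :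
    (Finsupp.mapDomain.addMonoidHom Nat.succ : AddMonoid.End (ℕ →₀ M))^[j] p =
      Finsupp.mapDomain (· + j) p := by
  induction j with
  | zero => exact Finsupp.mapDomain_id.symm
  | succ n ih =>
    rw [Function.iterate_succ_apply', ih]
    exact (Finsupp.mapDomain_comp).symm

section PolynomialModule

variable {B : Type*} [Ring B] {M : Type*} [AddCommGroup M] [Module Bᵐᵒᵖ M]

attribute [local instance] polyModOp

theorem op_smul_eq_rsmul (p : ℕ →₀ M) (f : B[X]) : op f • p = rsmul B M p f := rfl

theorem rsmul_add_left (p q : ℕ →₀ M) (f : B[X]) :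
    rsmul B M (p + q) f = rsmul B M p f + rsmul B M q f :=
  smul_add (op f) p q

theorem rsmul_add_right (p : ℕ →₀ M) (f g : B[X]) :
    rsmul B M p (f + g) = rsmul B M p f + rsmul B M p g := by
  simp only [← op_smul_eq_rsmul, op_add, add_smul]

theorem rsmul_sub_right (p : ℕ →₀ M) (f g : B[X]) :
    rsmul B M p (f - g) = rsmul B M p f - rsmul B M p g := by
  simp only [← op_smul_eq_rsmul, op_sub, sub_smul]

theorem rsmul_monomial (p : ℕ →₀ M) (j : ℕ) (b : B) :
    rsmul B M p (monomial j b) = op b • Finsupp.mapDomain (· + j) p := by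
  change eval₂ (Module.toAddMonoidEnd Bᵐᵒᵖ (ℕ →₀ M))
    (Finsupp.mapDomain.addMonoidHom Nat.succ : AddMonoid.End (ℕ →₀ M))
    (opRingEquiv B (op (monomial j b))) p = _
  rw [opRingEquiv_op_monomial]
  erw [eval₂_monomial]
  exact congrArg (op b • ·) (Finsupp.mapDomain_succ_iterate j p)

theorem rsmul_single_monomial (i j : ℕ) (m : M) (b : B) :
    rsmul B M (Finsupp.single i m) (monomial j b) = Finsupp.single (i + j) (op b • m) := by
  rw [rsmul_monomial, Finsupp.mapDomain_single, Finsupp.smul_single]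

theorem rsmul_apply (p : ℕ →₀ M) (f : B[X]) (n : ℕ) :
    rsmul B M p f n = ∑ j ∈ Finset.range (n + 1), op (f.coeff j) • p (n - j) := by
  induction f using Polynomial.induction_on' with
  | add f g hf hg =>
    simp only [rsmul_add_right, Finsupp.add_apply, hf, hg, coeff_add, op_add, add_smul,
      Finset.sum_add_distrib]
  | monomial j b =>
    have hshift : Finsupp.mapDomain (· + j) p n = if j ≤ n then p (n - j) else 0 := by
      split_ifs with h
      · conv_lhs => rw [← Nat.sub_add_cancel h]
        exact Finsupp.mapDomain_apply (add_left_injective j) p (n - j)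
      · exact Finsupp.mapDomain_of_notMem_range _ _ fun ⟨a, ha⟩ => h (ha ▸ Nat.le_add_left j a)
    simp only [rsmul_monomial, Finsupp.smul_apply, hshift, coeff_monomial, apply_ite op,
      op_zero, ite_smul, zero_smul, Finset.sum_ite_eq, Finset.mem_range, Nat.lt_succ_iff]
    split_ifs <;> simp

theorem rsmul_apply_zero (p : ℕ →₀ M) (f : B[X]) : rsmul B M p f 0 = op (f.coeff 0) • p 0 := by
  simp [rsmul_apply]

theorem rsmul_eq_zero_of_forall (p : ℕ →₀ M) (f : B[X]) (h : ∀ i j, op (f.coeff j) • p i = 0) :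
    rsmul B M p f = 0 := by
  ext n
  simp [rsmul_apply, h]

theorem RArmendariz.rsmul_eq_zero_iff (hArm : RArmendariz B M) (p : ℕ →₀ M) (f : B[X]) :
    rsmul B M p f = 0 ↔ ∀ i j, op (f.coeff j) • p i = 0 :=
  ⟨hArm p f, rsmul_eq_zero_of_forall p f⟩

theorem RArmendariz.isLeftSemicentral (hArm : RArmendariz B M) {m : M} {e : B}
    (he : IsIdempotentElem e) (hann : rAnn B {m} = {x | ∃ b, x = e * b}) :
    IsLeftSemicentral e := by
  have hmem : ∀ x, op x • m = 0 ↔ e * x = x := fun x => by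
    rw [← mem_rAnn_singleton, hann]
    exact he.exists_eq_mul_iff x
  intro r
  set a := r * e - e * r * e
  have hae : a * e = a := by simp only [a, sub_mul, mul_assoc, he.eq]
  have hea : e * a = 0 := by simp only [a, mul_sub, ← mul_assoc, he.eq, sub_self]
  have haa : a * a = 0 := by rw [← hae, mul_assoc, ← mul_assoc e, hea, zero_mul, mul_zero]
  have hp : rsmul B M (Finsupp.single 0 m + Finsupp.single 1 (op a • m))
      (monomial 0 e - monomial 1 a) = 0 := by
    simp only [rsmul_sub_right, rsmul_add_left, rsmul_single_monomial, smul_smul, ← op_mul, hae,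
      haa, (hmem e).2 he.eq, op_zero, zero_smul, Finsupp.single_zero, zero_add, add_zero, sub_self]
  have hma : op a • m = 0 := by simpa using hArm _ _ hp 0 1
  rw [← sub_eq_zero]
  change a = 0
  rw [← (hmem a).1 hma, hea]

theorem RArmendariz.isPPMod_polynomial (hArm : RArmendariz B M) (hPP : IsPPMod B M) :
    IsPPMod B[X] (ℕ →₀ M) := by
  intro p
  choose e he hann using fun i => hPP (p i)
  have hmem : ∀ i b, op b • p i = 0 ↔ e i * b = b := fun i b => by
    rw [← mem_rAnn_singleton, hann i]
    exact IsIdempotentElem.exists_eq_mul_iff (he i) b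
  obtain ⟨E, hE, hEx⟩ := exists_isLeftSemicentral_mul_eq_self_iff p.support e
    fun i => hArm.isLeftSemicentral (he i) (hann i)
  have hCE : IsIdempotentElem (C E) := hE.isIdempotentElem.map C
  refine ⟨C E, hCE.eq, Set.ext fun f => ?_⟩
  calc f ∈ rAnn B[X] {p} ↔ ∀ j i, op (f.coeff j) • p i = 0 := by
        rw [mem_rAnn_singleton, op_smul_eq_rsmul, hArm.rsmul_eq_zero_iff, forall_comm]
    _ ↔ ∀ j, E * f.coeff j = f.coeff j := by
        refine forall_congr' fun j => ?_
        rw [hEx]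
        refine forall_congr' fun i => ?_
        by_cases hi : p i = 0
        · simp [hi]
        · simp [hi, hmem]
    _ ↔ C E * f = f := by simp only [Polynomial.ext_iff, coeff_C_mul]
    _ ↔ ∃ g, f = C E * g := (hCE.exists_eq_mul_iff f).symm

theorem IsPPMod.of_polynomial (h : IsPPMod B[X] (ℕ →₀ M)) : IsPPMod B M := by
  intro m
  obtain ⟨E, hE, hann⟩ := h (Finsupp.single 0 m)
  have hmem : ∀ f : B[X], rsmul B M (Finsupp.single 0 m) f = 0 ↔ E * f = f := fun f => by
    rw [← op_smul_eq_rsmul, ← mem_rAnn_singleton, hann]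
    exact IsIdempotentElem.exists_eq_mul_iff hE f
  have hE0 : op (E.coeff 0) • m = 0 := by
    simpa [rsmul_apply_zero] using DFunLike.congr_fun ((hmem E).2 hE) 0
  refine ⟨E.coeff 0, by simpa [mul_coeff_zero] using congrArg (coeff · 0) hE,
    Set.ext fun b => ⟨fun hb => ?_, ?_⟩⟩
  · have hCb : E * C b = C b := (hmem (C b)).1 <| by
      rw [← monomial_zero_left, rsmul_single_monomial, (mem_rAnn_singleton b m).1 hb,
        Finsupp.single_zero]
    exact ⟨b, by simpa [mul_coeff_zero] using (congrArg (coeff · 0) hCb).symm⟩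
  · rintro ⟨c, rfl⟩
    rw [mem_rAnn_singleton, op_mul, mul_smul, hE0, smul_zero]

end PolynomialModule

theorem stmt14_general {B : Type*} [Ring B] {M : Type*} [AddCommGroup M] [Module Bᵐᵒᵖ M]
    (hArm : RArmendariz B M) :
    letI := polyModOp B M
    (IsPPMod B M ↔ IsPPMod (Polynomial B) (ℕ →₀ M)) :=
  ⟨hArm.isPPMod_polynomial, IsPPMod.of_polynomial⟩

/-- If `M` is an Armendariz right `B`-module with `B ⊆ M`, then `M` is a p.p.-module over
`B` if and only if `M[x]` is a p.p.-module over `B[x]`. -/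
theorem stmt14 {B : Type*} [Ring B] {M : Type*} [AddCommGroup M] [Module Bᵐᵒᵖ M]
    (ι : B →ₗ[Bᵐᵒᵖ] M) (hι : Function.Injective ι)
    (hArm : RArmendariz B M) :
    letI := polyModOp B M
    (IsPPMod B M ↔ IsPPMod (Polynomial B) (ℕ →₀ M)) :=
  stmt14_general hArm
end

section
/- Let B be a ring and M a right B-module. Then M is a p.q.-Baer module over B if and only if the polynomial module M[x] is a p.q.-Baer module over B[x]. -/
open Polynomial MulOpposite

/-!
The annihilator `ann(mB)` is a two-sided ideal, so in a p.q.-Baer module it is `eB` for a *left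
semicentral* idempotent `e` (`eae = ae`). For such idempotents `eB ∩ fB = efB` with `ef` again left
semicentral, so the annihilator of `p₀B + ⋯ + pₙB` is `gB` for one left semicentral idempotent `g`.
An inductive argument on the coefficients shows that `r ∈ B[x]` annihilates `p B[x]` exactly when
every coefficient of `r` annihilates every `pᵢB`; hence `ann(p B[x]) = g B[x]`. Conversely, for
`m ∈ M` seen as a constant polynomial, `ann(mB)` is generated by the constant coefficient of the
idempotent generating `ann(m B[x])`.
-/

section LeftSemicentral

variable {S : Type*} [Ring S]

/-- Equivalently, `eS` is a two-sided ideal and `e` is idempotent. -/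
structure IsLeftSemicentralIdempotent (e : S) : Prop where
  idem : IsIdempotentElem e
  mul_mul_self : ∀ a, e * a * e = a * e

namespace IsLeftSemicentralIdempotent

theorem one : IsLeftSemicentralIdempotent (1 : S) :=
  ⟨IsIdempotentElem.one, fun a => by rw [one_mul]⟩

theorem mul_mul_eq_self_iff {e f x : S} (he : IsIdempotentElem e)
    (hf : IsLeftSemicentralIdempotent f) : e * f * x = x ↔ e * x = x ∧ f * x = x := by
  constructor
  · intro h
    constructor
    · rw [← h, ← mul_assoc, ← mul_assoc, he.eq]
    · rw [← h, ← mul_assoc, ← mul_assoc, hf.mul_mul_self]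
  · rintro ⟨hex, hfx⟩
    rw [mul_assoc, hfx, hex]

theorem mul {e f : S} (he : IsLeftSemicentralIdempotent e) (hf : IsLeftSemicentralIdempotent f) :
    IsLeftSemicentralIdempotent (e * f) where
  idem := (mul_mul_eq_self_iff he.idem hf).2
    ⟨by rw [← mul_assoc, he.idem.eq], by rw [← mul_assoc, hf.mul_mul_self]⟩
  mul_mul_self a := by
    calc e * f * a * (e * f) = e * (f * (a * e) * f) := by simp only [mul_assoc]
      _ = a * (e * f) := by rw [hf.mul_mul_self, ← mul_assoc, ← mul_assoc, he.mul_mul_self,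
          mul_assoc]

end IsLeftSemicentralIdempotent

theorem exists_isLeftSemicentralIdempotent_mul_eq_self_iff {ι : Type*} (s : Finset ι) (e : ι → S)
    (he : ∀ i ∈ s, IsLeftSemicentralIdempotent (e i)) :
    ∃ g, IsLeftSemicentralIdempotent g ∧ ∀ x, g * x = x ↔ ∀ i ∈ s, e i * x = x := by
  classical
  induction s using Finset.induction_on with
  | empty => exact ⟨1, .one, fun x => by simp⟩
  | insert i s _ ih =>
    obtain ⟨g, hg, hgs⟩ := ih fun j hj => he j (Finset.mem_insert_of_mem hj)
    have hei := he i (Finset.mem_insert_self i s)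
    refine ⟨e i * g, hei.mul hg, fun x => ?_⟩
    rw [IsLeftSemicentralIdempotent.mul_mul_eq_self_iff hei.idem hg, hgs,
      Finset.forall_mem_insert]

theorem isIdempotentGenerated_iff {C : Set S} :
    IsIdempotentGenerated S C ↔ ∃ e, IsIdempotentElem e ∧ ∀ x, x ∈ C ↔ e * x = x := by
  constructor
  · rintro ⟨e, he, rfl⟩
    refine ⟨e, he, fun x => ⟨?_, fun h => ⟨x, h.symm⟩⟩⟩
    rintro ⟨b, rfl⟩
    rw [← mul_assoc, he]
  · rintro ⟨e, he, hC⟩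
    refine ⟨e, he, Set.ext fun x => ⟨fun h => ⟨x, ((hC x).1 h).symm⟩, ?_⟩⟩
    rintro ⟨b, rfl⟩
    rw [hC, ← mul_assoc, he.eq]

theorem IsIdempotentGenerated.exists_isLeftSemicentralIdempotent {C : Set S}
    (hC : IsIdempotentGenerated S C) (hmul : ∀ a x, x ∈ C → a * x ∈ C) :
    ∃ e, IsLeftSemicentralIdempotent e ∧ ∀ x, x ∈ C ↔ e * x = x := by
  obtain ⟨e, he, hCe⟩ := isIdempotentGenerated_iff.1 hC
  refine ⟨e, ⟨he, fun a => ?_⟩, hCe⟩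
  rw [mul_assoc, ← hCe]
  exact hmul a e ((hCe e).2 he)

end LeftSemicentral

section Annihilator

variable {S : Type*} [Ring S] {N : Type*} [AddCommGroup N] [Module Sᵐᵒᵖ N]

variable (S) in
/-- `ann_S(nS)` -/
def annCyclic (n : N) : Set S := rAnn S {x : N | ∃ b : S, x = op b • n}

theorem mem_annCyclic_iff {n : N} {r : S} : r ∈ annCyclic S n ↔ ∀ b, op (b * r) • n = 0 := by
  constructor
  · intro h b
    rw [op_mul, mul_smul]
    exact h _ ⟨b, rfl⟩
  · rintro h _ ⟨b, rfl⟩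
    rw [← mul_smul, ← op_mul]
    exact h b

theorem mem_annCyclic_zero (r : S) : r ∈ annCyclic S (0 : N) :=
  mem_annCyclic_iff.2 fun _ => smul_zero _

theorem mul_mem_annCyclic_left {n : N} {r : S} (a : S) (h : r ∈ annCyclic S n) :
    a * r ∈ annCyclic S n :=
  mem_annCyclic_iff.2 fun b => by rw [← mul_assoc]; exact mem_annCyclic_iff.1 h _

theorem mul_mem_annCyclic_right {n : N} {r : S} (h : r ∈ annCyclic S n) (a : S) :
    r * a ∈ annCyclic S n :=
  mem_annCyclic_iff.2 fun b => by rw [← mul_assoc, op_mul, mul_smul, mem_annCyclic_iff.1 h b,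
    smul_zero]

theorem IsPQBaerMod.exists_isLeftSemicentralIdempotent {ι : Type*} (hN : IsPQBaerMod S N)
    (s : Finset ι) (n : ι → N) :
    ∃ g, IsLeftSemicentralIdempotent g ∧ ∀ x, g * x = x ↔ ∀ i ∈ s, x ∈ annCyclic S (n i) := by
  have hNn (i : ι) : IsIdempotentGenerated S (annCyclic S (n i)) := hN (n i)
  choose e he hen using fun i =>
    (hNn i).exists_isLeftSemicentralIdempotent fun a _ => mul_mem_annCyclic_left a
  obtain ⟨g, hg, hgs⟩ := exists_isLeftSemicentralIdempotent_mul_eq_self_iff s e fun i _ => he i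
  exact ⟨g, hg, fun x => by simp only [hgs, hen]⟩

end Annihilator

namespace PolyMod

open Finset.HasAntidiagonal

variable {B : Type*} [Ring B] {M : Type*} [AddCommGroup M] [Module Bᵐᵒᵖ M]

attribute [local instance] polyModOp

variable (M) in
/-- Multiplication by `x` on `M[x]`, as used in `polyModAux`. -/
noncomputable def shift : AddMonoid.End (ℕ →₀ M) := Finsupp.mapDomain.addMonoidHom Nat.succ

theorem shift_pow_apply (k : ℕ) (p : ℕ →₀ M) :
    (shift M ^ k) p = Finsupp.mapDomain (· + k) p := by
  induction k with
  | zero => exact Finsupp.mapDomain_id.symm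
  | succ k ih =>
    rw [pow_succ', AddMonoid.End.coe_mul, Function.comp_apply, ih]
    exact (Finsupp.mapDomain_comp ..).symm

theorem op_smul_apply (f : B[X]) (p : ℕ →₀ M) (n : ℕ) :
    (op f • p) n = ∑ x ∈ antidiagonal n, op (f.coeff x.2) • p x.1 := by
  induction f using Polynomial.induction_on' with
  | add f g hf hg => simp only [op_add, add_smul, Finsupp.add_apply, hf, hg, coeff_add,
      Finset.sum_add_distrib]
  | monomial k a =>
    change (eval₂ _ (shift M) (opRingEquiv B (op (monomial k a)))) p n = _
    rw [opRingEquiv_op_monomial, eval₂_monomial, AddMonoid.End.coe_mul, Function.comp_apply,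
      shift_pow_apply]
    change op a • Finsupp.mapDomain (· + k) p n = _
    simp only [coeff_monomial, apply_ite op, op_zero, ite_smul, zero_smul]
    by_cases hkn : k ≤ n
    · obtain ⟨m, rfl⟩ := Nat.exists_eq_add_of_le' hkn
      rw [Finsupp.mapDomain_apply (add_left_injective k),
        Finset.sum_eq_single_of_mem (m, k) (mem_antidiagonal.mpr rfl), if_pos rfl]
      rintro ⟨i, j⟩ hij hne
      rw [mem_antidiagonal] at hij
      exact if_neg fun hkj => hne (by ext <;> dsimp at * <;> omega)
    · rw [Finsupp.mapDomain_of_notMem_range _ _ fun ⟨j, hj⟩ => hkn (hj ▸ Nat.le_add_left k j),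
        smul_zero]
      refine (Finset.sum_eq_zero fun x hx => if_neg ?_).symm
      have := mem_antidiagonal.mp hx
      omega

theorem C_mem_annCyclic {p : ℕ →₀ M} {c : B} (hc : ∀ i, c ∈ annCyclic B (p i)) :
    C c ∈ annCyclic B[X] p := by
  refine mem_annCyclic_iff.2 fun q => Finsupp.ext fun n => ?_
  rw [op_smul_apply, Finsupp.zero_apply]
  refine Finset.sum_eq_zero fun x _ => ?_
  rw [coeff_mul_C]
  exact mem_annCyclic_iff.1 (hc x.1) _

theorem coeff_zero_mem_annCyclic {p : ℕ →₀ M} {r : B[X]} (hr : r ∈ annCyclic B[X] p) :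
    r.coeff 0 ∈ annCyclic B (p 0) := by
  refine mem_annCyclic_iff.2 fun b => ?_
  have := congrArg (· 0) (mem_annCyclic_iff.1 hr (C b))
  simpa only [op_smul_apply, Finset.Nat.antidiagonal_zero, Finset.sum_singleton, coeff_C_mul,
    Finsupp.zero_apply] using this

/-- `M[x]` is quasi-Armendariz. By induction on `i + j` and then on `j`: multiplying by the
idempotent `t` with `tB = ⋂ k < i, ann(p k B)` kills the terms of `p · b t r` at degree `i + j`
with `k < i`, and those with `k > i` vanish by induction. -/
theorem coeff_mem_annCyclic (hM : IsPQBaerMod B M) {p : ℕ →₀ M} {r : B[X]}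
    (hr : r ∈ annCyclic B[X] p) (i j : ℕ) : r.coeff j ∈ annCyclic B (p i) := by
  have hsum (b : B) (n : ℕ) : ∑ x ∈ antidiagonal n, op (b * r.coeff x.2) • p x.1 = 0 := by
    have := congrArg (· n) (mem_annCyclic_iff.1 hr (C b))
    simpa only [op_smul_apply, coeff_C_mul, Finsupp.zero_apply] using this
  choose t ht htp using fun i => hM.exists_isLeftSemicentralIdempotent (Finset.range i) p
  obtain ⟨n, hn⟩ : ∃ n, i + j = n := ⟨_, rfl⟩
  induction n using Nat.strong_induction_on generalizing i j with | _ n ihn =>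
  induction j using Nat.strong_induction_on generalizing i with | _ j ihj =>
  have htr : t i * r.coeff j = r.coeff j :=
    (htp i _).2 fun k hk => ihn (k + j) (by rw [Finset.mem_range] at hk; omega) k j rfl
  refine mem_annCyclic_iff.2 fun b => ?_
  have hn' := hsum (b * t i) n
  rwa [Finset.sum_eq_single_of_mem (i, j) (mem_antidiagonal.2 hn), mul_assoc, htr] at hn'
  rintro ⟨i', j'⟩ hij hne
  rw [mem_antidiagonal] at hij
  have hj' : j' ≠ j := by
    rintro rfl
    exact hne (Prod.ext (by dsimp only; omega) rfl)
  rcases lt_or_gt_of_ne hj' with hj | hj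
  · exact mem_annCyclic_iff.1 (ihj j' hj i' (by omega)) _
  · have hti : t i ∈ annCyclic B (p i') := (htp i _).1 (ht i).idem i' (by simp; omega)
    rw [mul_assoc]
    exact mem_annCyclic_iff.1 (mul_mem_annCyclic_right hti _) _

theorem _root_.IsPQBaerMod.polynomial (hM : IsPQBaerMod B M) : IsPQBaerMod B[X] (ℕ →₀ M) := by
  intro p
  obtain ⟨g, hg, hgp⟩ := hM.exists_isLeftSemicentralIdempotent p.support p
  have hgp' (x : B) : g * x = x ↔ ∀ i, x ∈ annCyclic B (p i) := by
    refine (hgp x).trans ⟨fun h i => ?_, fun h i _ => h i⟩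
    by_cases hi : i ∈ p.support
    · exact h i hi
    · rw [Finsupp.notMem_support_iff.1 hi]
      exact mem_annCyclic_zero x
  refine isIdempotentGenerated_iff.2 ⟨C g, by rw [IsIdempotentElem, ← C_mul, hg.idem.eq],
    fun r => ⟨fun hr => ?_, fun hr => ?_⟩⟩
  · ext j
    rw [coeff_C_mul]
    exact (hgp' _).2 fun i => coeff_mem_annCyclic hM hr i j
  · rw [← hr]
    exact mul_mem_annCyclic_right (C_mem_annCyclic ((hgp' g).1 hg.idem)) r

theorem _root_.IsPQBaerMod.of_polynomial (h : IsPQBaerMod B[X] (ℕ →₀ M)) : IsPQBaerMod B M := by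
  intro m
  obtain ⟨E, hE, hEp⟩ := isIdempotentGenerated_iff.1 (h (Finsupp.single 0 m))
  refine isIdempotentGenerated_iff.2 ⟨E.coeff 0, by rw [IsIdempotentElem, ← mul_coeff_zero, hE.eq],
    fun r => ⟨fun hr => ?_, fun hr => ?_⟩⟩
  · have hCr : C r ∈ annCyclic B[X] (Finsupp.single 0 m) := C_mem_annCyclic fun i => by
      rw [Finsupp.single_apply]
      split_ifs
      exacts [hr, mem_annCyclic_zero r]
    simpa using congrArg (coeff · 0) ((hEp _).1 hCr)
  · rw [← hr]
    have := coeff_zero_mem_annCyclic ((hEp E).2 hE)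
    rw [Finsupp.single_eq_same] at this
    exact mul_mem_annCyclic_right this r

end PolyMod

/-- `M` is a p.q.-Baer right `B`-module if and only if `M[x]` is a p.q.-Baer right
`B[x]`-module. -/
theorem stmt19 {B : Type*} [Ring B] {M : Type*} [AddCommGroup M] [Module Bᵐᵒᵖ M] :
    letI := polyModOp B M
    (IsPQBaerMod B M ↔ IsPQBaerMod (Polynomial B) (ℕ →₀ M)) :=
  ⟨IsPQBaerMod.polynomial, IsPQBaerMod.of_polynomial⟩
end
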